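/- arXiv:1601.02977 — 2 statements merged into one kernel-verified Lean document; each statement's English description precedes it below -/
import Mathlib

section
/- Let D = ℝ·(1, ..., 1) ⊆ ℝ^n (n ≥ 1) with quotient map q : ℝ^n → ℝ^n / D. Then the map h : ℝ_{≥0}^n → (ℝ^n / D) × ℝ_{≥0} defined by h(r) = ( q(−r), r_1 r_2 ⋯ r_n ) is a homeomorphism. -/
/-!
Every point of the orthant is uniquely `w + s • 1` with `s = min r ≥ 0` and `w ≥ 0` having a zero
coordinate, and such `w` are exactly the canonical representatives of the classes modulo the
diagonal. For fixed `w`, `s ↦ ∏ a, (w a + s)` increases strictly from `0` to `∞` on `[0, ∞)`, so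
`(w, s) ↦ (w, ∏ a, (w a + s))` is bijective; its inverse is continuous because the root of a
strictly monotone equation depending continuously on a parameter depends continuously on it.
-/

open scoped BigOperators

/-- The diagonal line D = ℝ·(1,…,1) ⊆ ℝ^n. -/
noncomputable def diagLine (n : ℕ) : Submodule ℝ (Fin n → ℝ) :=
  Submodule.span ℝ {fun _ => (1 : ℝ)}

open Finset Filter Set

theorem continuous_of_strictMonoOn_root {X : Type*} [TopologicalSpace X] {F : X → ℝ → ℝ}
    {p g : X → ℝ} {a : ℝ} (hF : ∀ c, Continuous fun x => F x c) (hp : Continuous p)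
    (hmono : ∀ x, StrictMonoOn (F x) (Ici a)) (hga : ∀ x, a ≤ g x)
    (hroot : ∀ x, F x (g x) = p x) : Continuous g := by
  refine continuous_iff_continuousAt.2 fun x₀ => tendsto_order.2 ⟨fun c hc => ?_, fun c hc => ?_⟩
  · rcases lt_or_ge c a with hca | hac
    · exact Eventually.of_forall fun x => hca.trans_le (hga x)
    · have hlt : F x₀ c < p x₀ := hroot x₀ ▸ hmono x₀ hac (hga x₀) hc
      filter_upwards [(hF c).continuousAt.eventually_lt hp.continuousAt hlt] with x hx
      exact ((hmono x).lt_iff_lt hac (hga x)).1 (hroot x ▸ hx)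
  · have hac : a ≤ c := (hga x₀).trans hc.le
    have hlt : p x₀ < F x₀ c := hroot x₀ ▸ hmono x₀ (hga x₀) hac hc
    filter_upwards [hp.continuousAt.eventually_lt (hF c).continuousAt hlt] with x hx
    exact ((hmono x).lt_iff_lt (hga x) hac).1 (hroot x ▸ hx)

namespace NonnegOrthant

variable {ι : Type*}

theorem mk_add_const (x : ι → ℝ) (c : ℝ) :
    (Submodule.Quotient.mk (fun a => x a + c) : (ι → ℝ) ⧸ (ℝ ∙ fun _ => (1 : ℝ))) =
      Submodule.Quotient.mk x :=
  (Submodule.Quotient.eq _).2 <| Submodule.mem_span_singleton.2 ⟨c, by ext; simp⟩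

variable [Fintype ι] [Nonempty ι]

theorem strictMonoOn_prod_add {w : ι → ℝ} (hw : ∀ a, 0 ≤ w a) :
    StrictMonoOn (fun s => ∏ a, (w a + s)) (Ici 0) := by
  intro s hs t _ hst
  have hpos : ∀ a, 0 < w a + t := fun a => by linarith [hw a, mem_Ici.1 hs]
  by_cases hzero : ∃ a, w a + s = 0
  · obtain ⟨a, ha⟩ := hzero
    show ∏ a, (w a + s) < ∏ a, (w a + t)
    rw [prod_eq_zero (mem_univ a) ha]
    exact prod_pos fun a _ => hpos a
  · push Not at hzero
    exact prod_lt_prod_of_nonempty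
      (fun a _ => (add_nonneg (hw a) hs).lt_of_ne' (hzero a))
      (fun a _ => by linarith) univ_nonempty

theorem exists_prod_add_eq {w : ι → ℝ} (hw : ∀ a, 0 ≤ w a) (hw₀ : ∃ a, w a = 0) {p : ℝ}
    (hp : 0 ≤ p) : ∃ s, 0 ≤ s ∧ ∏ a, (w a + s) = p := by
  obtain ⟨a₀, ha₀⟩ := hw₀
  have hcont : ContinuousOn (fun s => ∏ a, (w a + s)) (Icc 0 (p + 1)) := by fun_prop
  have hlow : ∏ a, (w a + 0) ≤ p := by
    rwa [prod_eq_zero (mem_univ a₀) (by rw [ha₀, add_zero])]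
  have hhigh : p ≤ ∏ a, (w a + (p + 1)) :=
    calc p ≤ (p + 1) ^ Fintype.card ι := by
          linarith [le_self_pow₀ (by linarith : 1 ≤ p + 1) (Fintype.card_ne_zero (α := ι))]
      _ = ∏ _a : ι, (p + 1) := by rw [prod_const, card_univ]
      _ ≤ ∏ a, (w a + (p + 1)) :=
          prod_le_prod (fun _ _ => by linarith) fun a _ => by linarith [hw a]
  obtain ⟨s, hs, hsp⟩ := intermediate_value_Icc (by linarith) hcont ⟨hlow, hhigh⟩
  exact ⟨s, hs.1, hsp⟩

noncomputable def prodAddRoot (w : ι → ℝ) (p : ℝ) : ℝ :=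
  Classical.epsilon fun s => 0 ≤ s ∧ ∏ a, (w a + s) = p

theorem prodAddRoot_spec {w : ι → ℝ} (hw : ∀ a, 0 ≤ w a) (hw₀ : ∃ a, w a = 0) {p : ℝ}
    (hp : 0 ≤ p) : 0 ≤ prodAddRoot w p ∧ ∏ a, (w a + prodAddRoot w p) = p :=
  Classical.epsilon_spec (exists_prod_add_eq hw hw₀ hp)

theorem prodAddRoot_prod_add {w : ι → ℝ} (hw : ∀ a, 0 ≤ w a) {s : ℝ} (hs : 0 ≤ s) :
    prodAddRoot w (∏ a, (w a + s)) = s :=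
  have hspec := Classical.epsilon_spec (p := fun t => 0 ≤ t ∧ ∏ a, (w a + t) = ∏ a, (w a + s))
    ⟨s, hs, rfl⟩
  (strictMonoOn_prod_add hw).injOn hspec.1 hs hspec.2

noncomputable def subMin (x : ι → ℝ) : ι → ℝ :=
  fun a => x a - univ.inf' univ_nonempty x

theorem subMin_nonneg (x : ι → ℝ) (a : ι) : 0 ≤ subMin x a :=
  sub_nonneg.2 (inf'_le x (mem_univ a))

theorem exists_subMin_eq_zero (x : ι → ℝ) : ∃ a, subMin x a = 0 := by
  obtain ⟨a, -, ha⟩ := exists_mem_eq_inf' univ_nonempty x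
  exact ⟨a, sub_eq_zero.2 ha.symm⟩

theorem continuous_subMin : Continuous (subMin (ι := ι)) := by
  unfold subMin; fun_prop

theorem subMin_add_const (x : ι → ℝ) (c : ℝ) : subMin (fun a => x a + c) = subMin x := by
  have hinf : univ.inf' univ_nonempty (fun a => x a + c) = univ.inf' univ_nonempty x + c :=
    (apply_inf'_eq_inf'_comp univ_nonempty (· + c) fun _ _ => (min_add_add_right _ _ _).symm).symm
  funext a
  simp only [subMin, hinf]
  ring

theorem subMin_eq_of_mk_eq {x y : ι → ℝ}
    (h : (Submodule.Quotient.mk x : (ι → ℝ) ⧸ (ℝ ∙ fun _ => (1 : ℝ))) =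
      Submodule.Quotient.mk y) :
    subMin x = subMin y := by
  obtain ⟨c, hc⟩ := Submodule.mem_span_singleton.1 ((Submodule.Quotient.eq _).1 h)
  have hx : x = fun a => y a + c :=
    funext fun a => eq_add_of_sub_eq' (by simpa using (congrFun hc a).symm)
  rw [hx, subMin_add_const]

noncomputable def quotSubMin : (ι → ℝ) ⧸ (ℝ ∙ fun _ => (1 : ℝ)) → ι → ℝ :=
  Quotient.lift subMin fun _ _ hxy => subMin_eq_of_mk_eq (Quotient.sound hxy)

theorem quotSubMin_mk (x : ι → ℝ) : quotSubMin (Submodule.Quotient.mk x) = subMin x := rfl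

theorem mk_quotSubMin (u : (ι → ℝ) ⧸ (ℝ ∙ fun _ => (1 : ℝ))) :
    Submodule.Quotient.mk (quotSubMin u) = u := by
  obtain ⟨x, rfl⟩ := Submodule.Quotient.mk_surjective _ u
  exact mk_add_const x _

theorem quotSubMin_nonneg (u : (ι → ℝ) ⧸ (ℝ ∙ fun _ => (1 : ℝ))) (a : ι) :
    0 ≤ quotSubMin u a := by
  obtain ⟨x, rfl⟩ := Submodule.Quotient.mk_surjective _ u
  exact subMin_nonneg x a

theorem exists_quotSubMin_eq_zero (u : (ι → ℝ) ⧸ (ℝ ∙ fun _ => (1 : ℝ))) :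
    ∃ a, quotSubMin u a = 0 := by
  obtain ⟨x, rfl⟩ := Submodule.Quotient.mk_surjective _ u
  exact exists_subMin_eq_zero x

theorem continuous_quotSubMin : Continuous (quotSubMin (ι := ι)) :=
  continuous_subMin.quotient_lift _

theorem prodAddRoot_subMin {r : ι → ℝ} (hr : ∀ a, 0 ≤ r a) :
    prodAddRoot (subMin r) (∏ a, r a) = univ.inf' univ_nonempty r := by
  have := prodAddRoot_prod_add (subMin_nonneg r) (le_inf' univ_nonempty r fun a _ => hr a)
  simpa only [subMin, sub_add_cancel] using this

theorem prodAddRoot_quotSubMin_spec (u : (ι → ℝ) ⧸ (ℝ ∙ fun _ => (1 : ℝ))) {p : ℝ}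
    (hp : 0 ≤ p) :
    0 ≤ prodAddRoot (quotSubMin u) p ∧ ∏ a, (quotSubMin u a + prodAddRoot (quotSubMin u) p) = p :=
  prodAddRoot_spec (quotSubMin_nonneg u) (exists_quotSubMin_eq_zero u) hp

noncomputable def orthantHomeomorph :
    {r : ι → ℝ // ∀ a, 0 ≤ r a} ≃ₜ ((ι → ℝ) ⧸ (ℝ ∙ fun _ => (1 : ℝ))) × {p : ℝ // 0 ≤ p} where
  toFun r := (Submodule.Quotient.mk (-(r : ι → ℝ)),
    ⟨∏ a, (r : ι → ℝ) a, prod_nonneg fun a _ => r.2 a⟩)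
  invFun up := ⟨fun a => quotSubMin (-up.1) a + prodAddRoot (quotSubMin (-up.1)) up.2,
    fun a => add_nonneg (quotSubMin_nonneg _ a) (prodAddRoot_quotSubMin_spec _ up.2.2).1⟩
  left_inv r := by
    ext a
    simp only [← Submodule.Quotient.mk_neg, neg_neg, quotSubMin_mk, prodAddRoot_subMin r.2]
    exact sub_add_cancel _ _
  right_inv up := by
    obtain ⟨u, p⟩ := up
    refine Prod.ext ?_ (Subtype.ext (prodAddRoot_quotSubMin_spec (-u) p.2).2)
    simp only [Submodule.Quotient.mk_neg, mk_add_const, mk_quotSubMin, neg_neg]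
  continuous_toFun :=
    ((Submodule.continuous_mkQ _).comp continuous_subtype_val.neg).prodMk (by fun_prop)
  continuous_invFun := by
    have hw : Continuous fun up : ((ι → ℝ) ⧸ (ℝ ∙ fun _ => (1 : ℝ))) × {p : ℝ // 0 ≤ p} =>
        quotSubMin (-up.1) :=
      continuous_quotSubMin.comp continuous_fst.neg
    have hroot : Continuous fun up : ((ι → ℝ) ⧸ (ℝ ∙ fun _ => (1 : ℝ))) × {p : ℝ // 0 ≤ p} =>
        prodAddRoot (quotSubMin (-up.1)) up.2 :=
      continuous_of_strictMonoOn_root (F := fun up s => ∏ a, (quotSubMin (-up.1) a + s))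
        (fun c => by fun_prop) (by fun_prop)
        (fun up => strictMonoOn_prod_add (quotSubMin_nonneg _))
        (fun up => (prodAddRoot_quotSubMin_spec _ up.2.2).1)
        (fun up => (prodAddRoot_quotSubMin_spec _ up.2.2).2)
    fun_prop

end NonnegOrthant

/-- h(r) = ([−r], r₁⋯r_n) is a homeomorphism from the non-negative orthant ℝ_{≥0}^n
onto (ℝ^n/D) × ℝ_{≥0}. -/
theorem stmt_5 (n : ℕ) (hn : 0 < n) :
    ∃ e : {r : Fin n → ℝ // ∀ a, 0 ≤ r a} ≃ₜ
        ((Fin n → ℝ) ⧸ diagLine n) × {p : ℝ // 0 ≤ p},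
      ∀ r : {r : Fin n → ℝ // ∀ a, 0 ≤ r a},
        e r = (Submodule.Quotient.mk (-(r : Fin n → ℝ)),
          ⟨∏ a, (r : Fin n → ℝ) a, Finset.prod_nonneg fun a _ => r.2 a⟩) := by
  have : Nonempty (Fin n) := Fin.pos_iff_nonempty.1 hn
  exact ⟨NonnegOrthant.orthantHomeomorph, fun r => rfl⟩
end

section
/- Let 𝒟 be a pretriangulated (stable) category, and let J_−^* : 𝒟 → 𝒟°_− and J_+^* : 𝒟 → 𝒟°_+ be exact functors admitting fully faithful left adjoints J_{−!}, J_{+!} and fully faithful right adjoints J_{−*}, J_{+*}. Let 𝒟_− = ker(J_+^*) and 𝒟_+ = ker(J_−^*), with inclusion functors I_{−!}, I_{+!} admitting right adjoints I_−^!, I_+^!. Assume: (a) the compositions J_+^* J_{−*} and J_−^* J_{+*} are equivalences (axiom SP1); and (b) the compositions J_−^* I_{−!} and J_+^* I_{+!} are conservative. Then the compositions I_+^! I_{−!} : 𝒟_− → 𝒟_+ and I_−^! I_{+!} : 𝒟_+ → 𝒟_− are equivalences (axiom SP2); i.e. the diagram 𝒟°_− ← 𝒟 → 𝒟°_+ is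 a spherical pair. -/
/-!
(SP1) makes the unit of `J_−^* ⊣ J_{−*}` invertible on the image of `J_{+!}`, and the counit of
`J_{+!} ⊣ J_+^*` invertible on the image of `J_{−*}`: such a map is inverted by both `J_−^*` and
`J_+^*`, and a morphism inverted by both is invertible, since its cone lies in `𝒟_+` and is killed
by `J_+^*`, hence vanishes by conservativity. So `Hom(𝒟_+, J_{+!}-) = 0` and
`Hom(J_{−*}-, 𝒟_−) = 0`, in every degree.

For `F ∈ 𝒟_−`, the fibre `W → F` of the unit `F → J_{−*}J_−^*F` lies in `𝒟_+` and computes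
`I_+^! F`, and `Hom(F, F') = Hom(W, F')` for `F' ∈ 𝒟_−`; hence `I_+^! I_{−!}` is fully faithful.
For `G ∈ 𝒟_+`, the cone `Z` of the counit `J_{+!}J_+^*G → G` lies in `𝒟_−` and `I_+^! Z ≅ G`.
The other equivalence follows by exchanging the roles of `−` and `+`.
-/

open CategoryTheory Limits Pretriangulated

theorem CategoryTheory.Functor.isZero_of_isZero_obj {C E : Type*} [Category C] [Category E]
    [HasZeroMorphisms C] (G : C ⥤ E) [G.ReflectsIsomorphisms] {X : C} (h : IsZero (G.obj X)) :
    IsZero X := by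
  have : IsIso (G.map (0 : X ⟶ X)) := h.isIso h _
  have := isIso_of_reflects_iso (0 : X ⟶ X) G
  exact (IsZero.iff_id_eq_zero X).2 (isIsoZeroSelfEquiv X this)

theorem CategoryTheory.Adjunction.rightOrthogonal_obj {C E : Type*} [Category C] [Category E]
    [HasZeroMorphisms C] [HasZeroMorphisms E] {F : C ⥤ E} {G : E ⥤ C} (adj : F ⊣ G) (B : E) :
    ObjectProperty.rightOrthogonal (fun X => IsZero (F.obj X)) (G.obj B) := fun X f hX => by
  have := adj.isRightAdjoint
  obtain ⟨g, rfl⟩ := (adj.homEquiv X B).surjective f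
  simp [hX.eq_of_src g 0, Adjunction.homEquiv_unit]

theorem CategoryTheory.Adjunction.leftOrthogonal_obj {C E : Type*} [Category C] [Category E]
    [HasZeroMorphisms C] [HasZeroMorphisms E] {F : C ⥤ E} {G : E ⥤ C} (adj : G ⊣ F) (A : E) :
    ObjectProperty.leftOrthogonal (fun X => IsZero (F.obj X)) (G.obj A) := fun Y f hY => by
  have := adj.isLeftAdjoint
  obtain ⟨g, rfl⟩ := (adj.homEquiv A Y).symm.surjective f
  simp [hY.eq_of_tgt g 0, Adjunction.homEquiv_counit]

instance CategoryTheory.Functor.isStableUnderShift_isZero_obj {C E A : Type*} [Category C]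
    [Category E] [AddMonoid A] [HasShift C A] [HasShift E A] [HasZeroMorphisms E]
    [∀ a : A, (shiftFunctor E a).PreservesZeroMorphisms] (F : C ⥤ E) [F.CommShift A] :
    ObjectProperty.IsStableUnderShift (fun X => IsZero (F.obj X)) A where
  isStableUnderShiftBy a := ⟨fun X hX =>
    ((shiftFunctor E a).map_isZero hX).of_iso ((F.commShiftIso a).app X)⟩

namespace CategoryTheory.Pretriangulated

variable {C : Type*} [Category C] [HasZeroObject C] [HasShift C ℤ] [Preadditive C]
  [∀ n : ℤ, (shiftFunctor C n).Additive] [Pretriangulated C]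

section Orthogonal

variable (P Q : ObjectProperty C) [P.IsStableUnderShift ℤ] [Q.IsStableUnderShift ℤ]
  {T : Triangle C}

theorem comp_mor₁_bijective_of_rightOrthogonal (hT : T ∈ distTriang C)
    (h₃ : P.rightOrthogonal T.obj₃) {X : C} (hX : P X) :
    Function.Bijective (fun g : X ⟶ T.obj₁ => g ≫ T.mor₁) := by
  refine ⟨(injective_iff_map_eq_zero (Preadditive.rightComp X T.mor₁)).2 fun g hg => ?_,
    fun k => ?_⟩
  · obtain ⟨h, rfl⟩ := Triangle.coyoneda_exact₂ _ (inv_rot_of_distTriang _ hT) g hg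
    obtain rfl : h = 0 := P.rightOrthogonal.le_shift (-1) _ h₃ h hX
    exact zero_comp
  · obtain ⟨g, rfl⟩ := Triangle.coyoneda_exact₂ _ hT k (h₃ _ hX)
    exact ⟨g, rfl⟩

theorem mor₁_comp_bijective_of_leftOrthogonal (hT : T ∈ distTriang C)
    (h₃ : Q.leftOrthogonal T.obj₃) {Y : C} (hY : Q Y) :
    Function.Bijective (fun g : T.obj₂ ⟶ Y => T.mor₁ ≫ g) := by
  refine ⟨(injective_iff_map_eq_zero (Preadditive.leftComp Y T.mor₁)).2 fun g hg => ?_,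
    fun k => ?_⟩
  · obtain ⟨h, rfl⟩ := Triangle.yoneda_exact₂ _ hT g hg
    simp [h₃ h hY]
  · obtain ⟨g, rfl⟩ := Triangle.yoneda_exact₂ _ (inv_rot_of_distTriang _ hT) k
      (Q.leftOrthogonal.le_shift (-1) _ h₃ _ hY)
    exact ⟨g, rfl⟩

variable {P} {R : C ⥤ P.FullSubcategory}

theorem isIso_homEquiv_mor₁ (hT : T ∈ distTriang C) (adj : P.ι ⊣ R) (h₁ : P T.obj₁)
    (h₃ : P.rightOrthogonal T.obj₃) :
    IsIso (adj.homEquiv ⟨T.obj₁, h₁⟩ T.obj₂ T.mor₁) := by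
  refine isIso_of_yoneda_map_bijective _ fun A => ?_
  have : (fun x : A ⟶ ⟨T.obj₁, h₁⟩ => x ≫ adj.homEquiv _ _ T.mor₁) =
      adj.homEquiv A T.obj₂ ∘ (fun g => g ≫ T.mor₁) ∘ P.ι.map := by
    funext x
    exact (adj.homEquiv_naturality_left x T.mor₁).symm
  rw [this]
  exact (adj.homEquiv _ _).bijective.comp
    ((comp_mor₁_bijective_of_rightOrthogonal P hT h₃ A.property).comp
      ((ObjectProperty.fullyFaithfulι P).map_bijective _ _))

theorem map_bijective_of_leftOrthogonal (hT : T ∈ distTriang C) (adj : P.ι ⊣ R) (h₁ : P T.obj₁)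
    (h₃ : P.rightOrthogonal T.obj₃) (h₃' : Q.leftOrthogonal T.obj₃) {Y : C} (hY : Q Y) :
    Function.Bijective (R.map : (T.obj₂ ⟶ Y) → _) := by
  have := isIso_homEquiv_mor₁ hT adj h₁ h₃
  set t := adj.homEquiv ⟨T.obj₁, h₁⟩ T.obj₂ T.mor₁
  rw [← (asIso t).symm.homFromEquiv.bijective.of_comp_iff']
  have : (asIso t).symm.homFromEquiv ∘ R.map =
      adj.homEquiv _ Y ∘ (fun g : T.obj₂ ⟶ Y => T.mor₁ ≫ g) := by
    funext g
    exact (adj.homEquiv_naturality_right (X := ⟨T.obj₁, h₁⟩) T.mor₁ g).symm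
  rw [this]
  exact (adj.homEquiv _ _).bijective.comp (mor₁_comp_bijective_of_leftOrthogonal Q hT h₃' hY)

end Orthogonal

theorem isIso_of_isIso_map_of_isIso_map {E₁ E₂ : Type*} [Category E₁] [Category E₂]
    [HasZeroObject E₁] [HasZeroObject E₂] [Preadditive E₁] [Preadditive E₂]
    [HasShift E₁ ℤ] [HasShift E₂ ℤ] [∀ n : ℤ, (shiftFunctor E₁ n).Additive]
    [∀ n : ℤ, (shiftFunctor E₂ n).Additive] [Pretriangulated E₁] [Pretriangulated E₂]
    (F₁ : C ⥤ E₁) (F₂ : C ⥤ E₂) [F₁.CommShift ℤ] [F₂.CommShift ℤ]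
    [F₁.IsTriangulated] [F₂.IsTriangulated]
    [(ObjectProperty.ι (fun X => IsZero (F₁.obj X)) ⋙ F₂).ReflectsIsomorphisms]
    {X Y : C} (f : X ⟶ Y) [IsIso (F₁.map f)] [IsIso (F₂.map f)] : IsIso f := by
  obtain ⟨Z, _, _, hT⟩ := distinguished_cocone_triangle f
  have hZ₁ : IsZero (F₁.obj Z) :=
    Triangle.isZero₃_of_isIso₁ _ (F₁.map_distinguished _ hT) (inferInstanceAs (IsIso (F₁.map f)))
  have hZ₂ : IsZero (F₂.obj Z) :=
    Triangle.isZero₃_of_isIso₁ _ (F₂.map_distinguished _ hT) (inferInstanceAs (IsIso (F₂.map f)))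
  have hZ : IsZero (⟨Z, hZ₁⟩ : ObjectProperty.FullSubcategory fun X => IsZero (F₁.obj X)) :=
    (ObjectProperty.ι _ ⋙ F₂).isZero_of_isZero_obj hZ₂
  exact (Triangle.isZero₃_iff_isIso₁ _ hT).1 ((ObjectProperty.ι _).map_isZero hZ)

end CategoryTheory.Pretriangulated

namespace CategoryTheory.SphericalPair

open Pretriangulated

variable {D Dm Dp : Type*} [Category D] [Category Dm] [Category Dp]
  [HasZeroObject D] [HasZeroObject Dm] [HasZeroObject Dp]
  [Preadditive D] [Preadditive Dm] [Preadditive Dp]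
  [HasShift D ℤ] [HasShift Dm ℤ] [HasShift Dp ℤ]
  [∀ n : ℤ, (shiftFunctor D n).Additive]
  [∀ n : ℤ, (shiftFunctor Dm n).Additive]
  [∀ n : ℤ, (shiftFunctor Dp n).Additive]
  [Pretriangulated D] [Pretriangulated Dm] [Pretriangulated Dp]
  {Jm : D ⥤ Dm} {Jp : D ⥤ Dp} [Jm.CommShift ℤ] [Jp.CommShift ℤ]
  [Jm.IsTriangulated] [Jp.IsTriangulated] {Jmr : Dm ⥤ D} {Jpl : Dp ⥤ D}

theorem isIso_unit_app_obj [Jpl.Full] [Jpl.Faithful] [Jmr.Full] [Jmr.Faithful]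
    (adjmr : Jm ⊣ Jmr) (adjpl : Jpl ⊣ Jp) [(Jmr ⋙ Jp).IsEquivalence]
    [(ObjectProperty.ι (fun X : D => IsZero (Jm.obj X)) ⋙ Jp).ReflectsIsomorphisms] (A : Dp) :
    IsIso (adjmr.unit.app (Jpl.obj A)) := by
  have : (Jpl ⋙ Jm).IsEquivalence :=
    (adjpl.comp adjmr).isEquivalence_left_of_isEquivalence_right
  have : IsIso (Jp.map (adjmr.unit.app (Jpl.obj A))) := by
    have : IsIso ((adjpl.comp adjmr).unit.app A) := inferInstance
    rw [Adjunction.comp_unit_app] at this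
    exact IsIso.of_isIso_comp_left (adjpl.unit.app A) _
  exact isIso_of_isIso_map_of_isIso_map Jm Jp _

theorem isIso_counit_app_obj [Jpl.Full] [Jpl.Faithful] [Jmr.Full] [Jmr.Faithful]
    (adjmr : Jm ⊣ Jmr) (adjpl : Jpl ⊣ Jp) [(Jmr ⋙ Jp).IsEquivalence]
    [(ObjectProperty.ι (fun X : D => IsZero (Jp.obj X)) ⋙ Jm).ReflectsIsomorphisms] (B : Dm) :
    IsIso (adjpl.counit.app (Jmr.obj B)) := by
  have : IsIso (Jm.map (adjpl.counit.app (Jmr.obj B))) := by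
    have : IsIso ((adjpl.comp adjmr).counit.app B) := inferInstance
    rw [Adjunction.comp_counit_app] at this
    exact IsIso.of_isIso_comp_right _ (adjmr.counit.app B)
  exact isIso_of_isIso_map_of_isIso_map Jp Jm _

theorem rightOrthogonal_leftAdjoint_obj [Jpl.Full] [Jpl.Faithful] [Jmr.Full] [Jmr.Faithful]
    (adjmr : Jm ⊣ Jmr) (adjpl : Jpl ⊣ Jp) [(Jmr ⋙ Jp).IsEquivalence]
    [(ObjectProperty.ι (fun X : D => IsZero (Jm.obj X)) ⋙ Jp).ReflectsIsomorphisms] (A : Dp) :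
    ObjectProperty.rightOrthogonal (fun X : D => IsZero (Jm.obj X)) (Jpl.obj A) :=
  have := isIso_unit_app_obj adjmr adjpl A
  ObjectProperty.prop_of_iso _ (asIso (adjmr.unit.app _)).symm (adjmr.rightOrthogonal_obj _)

theorem leftOrthogonal_rightAdjoint_obj [Jpl.Full] [Jpl.Faithful] [Jmr.Full] [Jmr.Faithful]
    (adjmr : Jm ⊣ Jmr) (adjpl : Jpl ⊣ Jp) [(Jmr ⋙ Jp).IsEquivalence]
    [(ObjectProperty.ι (fun X : D => IsZero (Jp.obj X)) ⋙ Jm).ReflectsIsomorphisms] (B : Dm) :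
    ObjectProperty.leftOrthogonal (fun X : D => IsZero (Jp.obj X)) (Jmr.obj B) :=
  have := isIso_counit_app_obj adjmr adjpl B
  ObjectProperty.prop_of_iso _ (asIso (adjpl.counit.app _)) (adjpl.leftOrthogonal_obj _)

theorem isEquivalence_ι_comp [Jpl.Full] [Jpl.Faithful] [Jmr.Full] [Jmr.Faithful]
    (adjmr : Jm ⊣ Jmr) (adjpl : Jpl ⊣ Jp) [(Jmr ⋙ Jp).IsEquivalence]
    [(ObjectProperty.ι (fun X : D => IsZero (Jp.obj X)) ⋙ Jm).ReflectsIsomorphisms]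
    [(ObjectProperty.ι (fun X : D => IsZero (Jm.obj X)) ⋙ Jp).ReflectsIsomorphisms]
    (Ip : D ⥤ ObjectProperty.FullSubcategory (fun X : D => IsZero (Jm.obj X)))
    (adjIp : ObjectProperty.ι (fun X : D => IsZero (Jm.obj X)) ⊣ Ip) :
    (ObjectProperty.ι (fun X : D => IsZero (Jp.obj X)) ⋙ Ip).IsEquivalence := by
  obtain ⟨hFF⟩ := (Functor.FullyFaithful.nonempty_iff_map_bijective
    (ObjectProperty.ι (fun X : D => IsZero (Jp.obj X)) ⋙ Ip)).2
    fun (F F' : ObjectProperty.FullSubcategory fun X : D => IsZero (Jp.obj X)) => by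
      obtain ⟨W, _, _, hT⟩ := distinguished_cocone_triangle₁ (adjmr.unit.app F.obj)
      have hW : IsZero (Jm.obj W) := Triangle.isZero₁_of_isIso₂ _ (Jm.map_distinguished _ hT)
        (inferInstanceAs (IsIso (Jm.map (adjmr.unit.app F.obj))))
      exact (map_bijective_of_leftOrthogonal _ hT adjIp hW (adjmr.rightOrthogonal_obj _)
        (leftOrthogonal_rightAdjoint_obj adjmr adjpl _) F'.property).comp
        ((ObjectProperty.fullyFaithfulι _).map_bijective F F')
  have : (ObjectProperty.ι (fun X : D => IsZero (Jp.obj X)) ⋙ Ip).EssSurj := ⟨fun G => by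
    obtain ⟨Z, p, _, hT⟩ := distinguished_cocone_triangle (adjpl.counit.app G.obj)
    have hZ : IsZero (Jp.obj Z) := Triangle.isZero₃_of_isIso₁ _ (Jp.map_distinguished _ hT)
      (inferInstanceAs (IsIso (Jp.map (adjpl.counit.app G.obj))))
    have : IsIso (adjIp.homEquiv G Z p) :=
      isIso_homEquiv_mor₁ (rot_of_distTriang _ hT) adjIp G.property
        (ObjectProperty.le_shift _ 1 _ (rightOrthogonal_leftAdjoint_obj adjmr adjpl _))
    exact ⟨⟨Z, hZ⟩, ⟨(asIso (adjIp.homEquiv G Z p)).symm⟩⟩⟩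
  exact { faithful := hFF.faithful, full := hFF.full }

end CategoryTheory.SphericalPair

/-- Conservative spherical pairs: given pretriangulated categories and exact functors
J_−^* : 𝒟 → 𝒟°_−, J_+^* : 𝒟 → 𝒟°_+ admitting fully faithful left adjoints J_{∓!} and
fully faithful right adjoints J_{∓*}, with 𝒟_− = ker J_+^*, 𝒟_+ = ker J_−^* (as full
subcategories, with inclusions I_{∓!} admitting right adjoints I_∓^!), if
(SP1) J_+^* J_{−*} and J_−^* J_{+*} are equivalences, and J_−^* I_{−!}, J_+^* I_{+!}
are conservative, then (SP2) holds: I_+^! I_{−!} and I_−^! I_{+!} are equivalences. -/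
theorem stmt_18
    {D Dm Dp : Type*} [Category D] [Category Dm] [Category Dp]
    [HasZeroObject D] [HasZeroObject Dm] [HasZeroObject Dp]
    [Preadditive D] [Preadditive Dm] [Preadditive Dp]
    [HasShift D ℤ] [HasShift Dm ℤ] [HasShift Dp ℤ]
    [∀ n : ℤ, (shiftFunctor D n).Additive]
    [∀ n : ℤ, (shiftFunctor Dm n).Additive]
    [∀ n : ℤ, (shiftFunctor Dp n).Additive]
    [Pretriangulated D] [Pretriangulated Dm] [Pretriangulated Dp]
    (Jm : D ⥤ Dm) (Jp : D ⥤ Dp)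
    [Jm.CommShift ℤ] [Jp.CommShift ℤ]
    [Jm.IsTriangulated] [Jp.IsTriangulated]
    (Jml Jmr : Dm ⥤ D) (Jpl Jpr : Dp ⥤ D)
    [Jml.Full] [Jml.Faithful] [Jmr.Full] [Jmr.Faithful]
    [Jpl.Full] [Jpl.Faithful] [Jpr.Full] [Jpr.Faithful]
    (adjml : Jml ⊣ Jm) (adjmr : Jm ⊣ Jmr)
    (adjpl : Jpl ⊣ Jp) (adjpr : Jp ⊣ Jpr)
    -- the subcategories 𝒟_− = ker(J_+^*) and 𝒟_+ = ker(J_−^*), with inclusions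
    -- I_{−!} = fullSubcategoryInclusion and right adjoints I_−^! = Im, I_+^! = Ip
    (Im : D ⥤ ObjectProperty.FullSubcategory (fun X : D => IsZero (Jp.obj X)))
    (Ip : D ⥤ ObjectProperty.FullSubcategory (fun X : D => IsZero (Jm.obj X)))
    (adjIm : ObjectProperty.ι (fun X : D => IsZero (Jp.obj X)) ⊣ Im)
    (adjIp : ObjectProperty.ι (fun X : D => IsZero (Jm.obj X)) ⊣ Ip)
    -- (SP1)
    [(Jmr ⋙ Jp).IsEquivalence] [(Jpr ⋙ Jm).IsEquivalence]
    -- conservativity of J_−^* I_{−!} and J_+^* I_{+!}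
    [(ObjectProperty.ι (fun X : D => IsZero (Jp.obj X)) ⋙ Jm).ReflectsIsomorphisms]
    [(ObjectProperty.ι (fun X : D => IsZero (Jm.obj X)) ⋙ Jp).ReflectsIsomorphisms] :
    -- (SP2): I_+^! I_{−!} and I_−^! I_{+!} are equivalences
    (ObjectProperty.ι (fun X : D => IsZero (Jp.obj X)) ⋙ Ip).IsEquivalence ∧
    (ObjectProperty.ι (fun X : D => IsZero (Jm.obj X)) ⋙ Im).IsEquivalence :=
  ⟨SphericalPair.isEquivalence_ι_comp adjmr adjpl Ip adjIp,
    SphericalPair.isEquivalence_ι_comp adjpr adjml Im adjIm⟩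
end
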